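/- Let ξ = (ξ₁,…,ξ_d) be a ℕ^d-valued random vector which, conditionally on a nonnegative random vector ζ = (ζ₁,…,ζ_d), has independent Poisson(ζ_i) coordinates. If ζ is strictly α-stable (t^{1/α}ζ' + (1-t)^{1/α}ζ'' =_d ζ for all t ∈ [0,1], independent copies), then ξ is discrete α-stable: t^{1/α}∘ξ' + (1-t)^{1/α}∘ξ'' =_d ξ for all t ∈ [0,1], where ∘ denotes coordinatewise independent binomial thinning. -/

import Mathlib

open scoped ENNReal NNReal
open MeasureTheory ProbabilityTheory

/-- Bernoulli(t) distribution as a `PMF` on `ℕ`. -/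
noncomputable def bernNat (t : ℝ) : PMF ℕ :=
  (PMF.bernoulli (min (Real.toNNReal t) 1) (min_le_right _ _)).map (fun b => if b then 1 else 0)

/-- Distribution of the sum of two independent `ℕ`-valued random variables. -/
noncomputable def pmfConvN (p q : PMF ℕ) : PMF ℕ := p.bind fun a => q.map fun b => a + b

/-- Distribution of the sum of `n` i.i.d. Bernoulli(t) random variables. -/
noncomputable def bernSum (t : ℝ) : ℕ → PMF ℕ
  | 0 => PMF.pure 0
  | n + 1 => pmfConvN (bernSum t n) (bernNat t)

/-- Product of independent `ℕ`-valued distributions indexed by `Fin d`. -/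
noncomputable def piPMF : {d : ℕ} → (Fin d → PMF ℕ) → PMF (Fin d → ℕ)
  | 0, _ => PMF.pure (fun i => i.elim0)
  | _ + 1, ps => (ps 0).bind fun a => (piPMF fun i => ps i.succ).map (Fin.cons a)

/-- Coordinatewise independent binomial thinning of a random vector in `ℕ^d`. -/
noncomputable def pmfThinVec {d : ℕ} (t : ℝ) (P : PMF (Fin d → ℕ)) : PMF (Fin d → ℕ) :=
  P.bind fun f => piPMF fun i => bernSum t (f i)

/-- Distribution of the sum of two independent `ℕ^d`-valued random vectors. -/
noncomputable def pmfConvVec {d : ℕ} (P Q : PMF (Fin d → ℕ)) : PMF (Fin d → ℕ) :=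
  P.bind fun a => Q.map fun b => a + b

/-!
Conditionally on `ζ = z`, the vector `ξ` has the law `poissonVec z` of independent Poisson(`z i`)
coordinates. Binomial thinning by `s` turns Poisson(`r`) into Poisson(`s r`), and independent
Poisson variables add their means, so `t^{1/α} ∘ ξ' + (1-t)^{1/α} ∘ ξ''` is mixed Poisson with
mixing vector `t^{1/α} ζ' + (1-t)^{1/α} ζ''`. By strict stability that vector has the law of `ζ`,
and a mixed Poisson law is determined by the law of its mixing vector.
-/

open Finset

lemma pmfConvN_apply (p q : PMF ℕ) (n : ℕ) :
    pmfConvN p q n = ∑ x ∈ antidiagonal n, p x.1 * q x.2 := by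
  simp only [pmfConvN, PMF.bind_apply, PMF.map_apply, ← ENNReal.tsum_mul_left, mul_ite, mul_zero]
  rw [← ENNReal.tsum_prod' (f := fun x : ℕ × ℕ => if n = x.1 + x.2 then p x.1 * q x.2 else 0),
    tsum_eq_sum (s := antidiagonal n) fun x hx => if_neg (by simpa [eq_comm] using hx)]
  exact sum_congr rfl fun x hx => if_pos (mem_antidiagonal.1 hx).symm

section Binomial

lemma bernNat_apply_zero {t : ℝ} (ht0 : 0 ≤ t) (ht1 : t ≤ 1) :
    bernNat t 0 = ENNReal.ofReal (1 - t) := by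
  rw [ENNReal.ofReal_sub _ ht0, ENNReal.ofReal_one]
  simp [bernNat, PMF.map_apply, min_eq_left (Real.toNNReal_le_one.2 ht1), PMF.bernoulli_apply,
    ENNReal.ofReal]

lemma bernNat_apply_one {t : ℝ} (ht1 : t ≤ 1) : bernNat t 1 = ENNReal.ofReal t := by
  simp [bernNat, PMF.map_apply, min_eq_left (Real.toNNReal_le_one.2 ht1), PMF.bernoulli_apply,
    ENNReal.ofReal]

lemma bernNat_apply_add_two (t : ℝ) (k : ℕ) : bernNat t (k + 2) = 0 := by
  simp [bernNat, PMF.map_apply]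

lemma pmfConvN_bernNat_apply_zero (p : PMF ℕ) (t : ℝ) :
    pmfConvN p (bernNat t) 0 = p 0 * bernNat t 0 := by
  simp [pmfConvN_apply]

lemma pmfConvN_bernNat_apply_succ (p : PMF ℕ) (t : ℝ) (k : ℕ) :
    pmfConvN p (bernNat t) (k + 1) = p (k + 1) * bernNat t 0 + p k * bernNat t 1 := by
  rw [pmfConvN_apply, Nat.sum_antidiagonal_succ', sum_eq_single (k, 0)]
  · rintro ⟨i, _ | j⟩ hij hne
    · exact (hne (by simpa using hij)).elim
    · simp [bernNat_apply_add_two]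
  · simp

lemma choose_mul_pow_mul_pow_succ_succ (t : ℝ) (n k : ℕ) :
    ((n + 1).choose (k + 1) : ℝ) * t ^ (k + 1) * (1 - t) ^ (n - k)
      = n.choose (k + 1) * t ^ (k + 1) * (1 - t) ^ (n - (k + 1)) * (1 - t)
        + n.choose k * t ^ k * (1 - t) ^ (n - k) * t := by
  rcases lt_or_ge k n with hkn | hnk
  · obtain ⟨j, rfl⟩ := Nat.exists_eq_add_of_lt hkn
    simp only [Nat.choose_succ_succ', show k + j + 1 - k = j + 1 by omega,
      show k + j + 1 - (k + 1) = j by omega]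
    push_cast
    ring
  · simp only [Nat.choose_succ_succ', Nat.choose_eq_zero_of_lt (Nat.lt_succ_of_le hnk),
      Nat.sub_eq_zero_of_le hnk, add_zero, pow_zero, mul_one, CharP.cast_eq_zero, zero_mul,
      zero_add]
    ring

lemma bernSum_apply {t : ℝ} (ht0 : 0 ≤ t) (ht1 : t ≤ 1) (n k : ℕ) :
    bernSum t n k = ENNReal.ofReal (n.choose k * t ^ k * (1 - t) ^ (n - k)) := by
  induction n generalizing k with
  | zero => cases k <;> simp [bernSum, PMF.pure_apply]
  | succ n ih =>
    cases k with
    | zero =>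
      rw [bernSum, pmfConvN_bernNat_apply_zero, ih, bernNat_apply_zero ht0 ht1,
        ← ENNReal.ofReal_mul (by positivity)]
      simp [pow_succ]
    | succ k =>
      rw [bernSum, pmfConvN_bernNat_apply_succ, ih, ih, bernNat_apply_zero ht0 ht1,
        bernNat_apply_one ht1, ← ENNReal.ofReal_mul (by positivity),
        ← ENNReal.ofReal_mul (by positivity), ← ENNReal.ofReal_add (by positivity) (by positivity),
        Nat.succ_sub_succ, choose_mul_pow_mul_pow_succ_succ]

end Binomial

section Poisson

lemma poissonMeasure_toPMF_apply (r : ℝ≥0) (n : ℕ) :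
    Po(r).toPMF n = ENNReal.ofReal (Real.exp (-r) * r ^ n / n.factorial) :=
  poissonMeasure_singleton r n

lemma poissonMeasure_toPMF_mul_bernSum {t : ℝ} (ht0 : 0 ≤ t) (ht1 : t ≤ 1) (r : ℝ≥0) (m k : ℕ) :
    Po(r).toPMF (m + k) * bernSum t (m + k) k
      = Po(t.toNNReal * r).toPMF k * Po((1 - t).toNNReal * r).toPMF m := by
  rw [poissonMeasure_toPMF_apply, poissonMeasure_toPMF_apply, poissonMeasure_toPMF_apply,
    bernSum_apply ht0 ht1, ← ENNReal.ofReal_mul (by positivity),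
    ← ENNReal.ofReal_mul (by positivity), Nat.add_sub_cancel, add_comm m k, Nat.cast_add_choose]
  congr 1
  push_cast
  rw [Real.coe_toNNReal _ ht0, Real.coe_toNNReal _ (by linarith),
    show -(r : ℝ) = -(t * r) + -((1 - t) * r) by ring, Real.exp_add, mul_pow, mul_pow]
  field_simp
  ring

lemma poissonMeasure_toPMF_bind_bernSum {t : ℝ} (ht0 : 0 ≤ t) (ht1 : t ≤ 1) (r : ℝ≥0) :
    Po(r).toPMF.bind (bernSum t) = Po(t.toNNReal * r).toPMF := by
  ext k
  have hlow : ∀ n < k, bernSum t n k = 0 := fun n hn => by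
    simp [bernSum_apply ht0 ht1, Nat.choose_eq_zero_of_lt hn]
  rw [PMF.bind_apply, ← ENNReal.summable.sum_add_tsum_nat_add' (k := k),
    sum_eq_zero fun n hn => by rw [hlow n (mem_range.1 hn), mul_zero], zero_add]
  simp_rw [poissonMeasure_toPMF_mul_bernSum ht0 ht1, ENNReal.tsum_mul_left, PMF.tsum_coe, mul_one]

lemma pmfConvN_poissonMeasure_toPMF (u v : ℝ≥0) :
    pmfConvN Po(u).toPMF Po(v).toPMF = Po(u + v).toPMF := by
  ext n
  have hterm : ∀ x : ℕ × ℕ, Po(u).toPMF x.1 * Po(v).toPMF x.2 = ENNReal.ofReal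
      (Real.exp (-u) * u ^ x.1 / x.1.factorial * (Real.exp (-v) * v ^ x.2 / x.2.factorial)) :=
    fun x => by
      rw [poissonMeasure_toPMF_apply, poissonMeasure_toPMF_apply,
        ENNReal.ofReal_mul (by positivity)]
  rw [pmfConvN_apply, sum_congr rfl fun x _ => hterm x,
    ← ENNReal.ofReal_sum_of_nonneg fun _ _ => by positivity, poissonMeasure_toPMF_apply]
  congr 1
  rw [NNReal.coe_add, (Commute.all _ _).add_pow', neg_add, Real.exp_add, mul_sum, sum_div]
  refine sum_congr rfl fun x hx => ?_
  rw [← mem_antidiagonal.1 hx, nsmul_eq_mul, Nat.cast_add_choose]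
  field_simp

end Poisson

section Product

lemma ENNReal.tsum_fin_prod_eq_prod_tsum {β : Type*} :
    ∀ {d : ℕ} (g : Fin d → β → ℝ≥0∞), ∑' f : Fin d → β, ∏ i, g i (f i) = ∏ i, ∑' b, g i b
  | 0, g => by simp
  | d + 1, g => by
    rw [← (Fin.consEquiv fun _ => β).tsum_eq, ENNReal.tsum_prod']
    simp only [Fin.consEquiv_apply, Fin.prod_univ_succ, Fin.cons_zero, Fin.cons_succ,
      ENNReal.tsum_mul_left, ENNReal.tsum_fin_prod_eq_prod_tsum fun i => g i.succ,
      ENNReal.tsum_mul_right]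

lemma piPMF_apply : ∀ {d : ℕ} (ps : Fin d → PMF ℕ) (g : Fin d → ℕ),
    piPMF ps g = ∏ i, ps i (g i)
  | 0, ps, g => by simp [piPMF, funext_iff]
  | d + 1, ps, g => by
    rw [piPMF, PMF.bind_apply, tsum_eq_single (g 0), PMF.map_apply, tsum_eq_single (Fin.tail g),
      if_pos (Fin.cons_self_tail g).symm, piPMF_apply, Fin.prod_univ_succ]
    · rfl
    · intro f hf
      rw [if_neg fun h => hf (by rw [h, Fin.tail_cons])]
    · intro a ha
      rw [PMF.map_apply]
      refine mul_eq_zero_of_right _ (ENNReal.tsum_eq_zero.2 fun f => if_neg ?_)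
      rintro rfl
      exact ha (by simp)

lemma piPMF_bind_piPMF {d : ℕ} (ps : Fin d → PMF ℕ) (K : Fin d → ℕ → PMF ℕ) :
    (piPMF ps).bind (fun f => piPMF fun i => K i (f i)) = piPMF fun i => (ps i).bind (K i) := by
  ext g
  simp only [PMF.bind_apply, piPMF_apply, ← prod_mul_distrib]
  exact ENNReal.tsum_fin_prod_eq_prod_tsum fun i n => ps i n * K i n (g i)

lemma piPMF_pure : ∀ {d : ℕ} (f : Fin d → ℕ), piPMF (fun i => PMF.pure (f i)) = PMF.pure f
  | 0, f => congrArg PMF.pure (funext fun i => i.elim0)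
  | d + 1, f => by
    rw [piPMF, PMF.pure_bind, piPMF_pure, PMF.pure_map]
    exact congrArg PMF.pure (Fin.cons_self_tail f)

lemma pmfThinVec_piPMF {d : ℕ} (t : ℝ) (ps : Fin d → PMF ℕ) :
    pmfThinVec t (piPMF ps) = piPMF fun i => (ps i).bind (bernSum t) :=
  piPMF_bind_piPMF ps fun _ => bernSum t

lemma pmfConvVec_piPMF {d : ℕ} (ps qs : Fin d → PMF ℕ) :
    pmfConvVec (piPMF ps) (piPMF qs) = piPMF fun i => pmfConvN (ps i) (qs i) := by
  simp only [pmfConvVec, pmfConvN, ← PMF.bind_pure_comp, Function.comp_def, Pi.add_apply,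
    ← piPMF_pure]
  simp_rw [fun a : Fin d → ℕ => piPMF_bind_piPMF qs fun i b => PMF.pure (a i + b)]
  exact piPMF_bind_piPMF ps fun i a => (qs i).bind fun b => PMF.pure (a + b)

end Product

section PoissonVec

-- Negative means are truncated to `0` by `Real.toNNReal`.
noncomputable def poissonVec {d : ℕ} (z : Fin d → ℝ) : PMF (Fin d → ℕ) :=
  piPMF fun i => Po((z i).toNNReal).toPMF

variable {d : ℕ}

lemma poissonVec_apply_of_nonneg {z : Fin d → ℝ} (hz : 0 ≤ z) (f : Fin d → ℕ) :
    poissonVec z f = ENNReal.ofReal (∏ i, (z i ^ f i * Real.exp (-(z i)) / (f i).factorial)) := by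
  rw [ENNReal.ofReal_prod_of_nonneg fun i _ =>
      div_nonneg (mul_nonneg (pow_nonneg (hz i) _) (Real.exp_pos _).le) (Nat.cast_nonneg _),
    poissonVec, piPMF_apply]
  refine prod_congr rfl fun i _ => ?_
  rw [poissonMeasure_toPMF_apply, Real.coe_toNNReal _ (hz i), mul_comm]

lemma measurable_poissonVec_apply (f : Fin d → ℕ) :
    Measurable fun z : Fin d → ℝ => poissonVec z f := by
  simp only [poissonVec, piPMF_apply, poissonMeasure_toPMF_apply]
  fun_prop

lemma pmfThinVec_poissonVec {t : ℝ} (ht0 : 0 ≤ t) (ht1 : t ≤ 1) (z : Fin d → ℝ) :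
    pmfThinVec t (poissonVec z) = poissonVec (t • z) := by
  simp only [poissonVec, pmfThinVec_piPMF, poissonMeasure_toPMF_bind_bernSum ht0 ht1,
    Pi.smul_apply, smul_eq_mul, Real.toNNReal_mul ht0]

lemma pmfConvVec_poissonVec {z w : Fin d → ℝ} (hz : 0 ≤ z) (hw : 0 ≤ w) :
    pmfConvVec (poissonVec z) (poissonVec w) = poissonVec (z + w) := by
  simp only [poissonVec, pmfConvVec_piPMF, pmfConvN_poissonMeasure_toPMF, Pi.add_apply,
    Real.toNNReal_add (hz _) (hw _)]

end PoissonVec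

namespace PMF

variable {α β X Y : Type*} [MeasurableSpace X] [MeasurableSpace Y]

def IsMixture (ξ : PMF α) (μ : Measure X) (P : X → PMF α) : Prop :=
  ∀ a, ξ a = ∫⁻ x, P x a ∂μ

variable {ξ : PMF α} {η : PMF β} {μ : Measure X} {ν : Measure Y} {P : X → PMF α} {Q : Y → PMF β}

lemma IsMixture.eq {ξ' : PMF α} (h : ξ.IsMixture μ P) (h' : ξ'.IsMixture μ P) : ξ = ξ' :=
  PMF.ext fun a => (h a).trans (h' a).symm

lemma IsMixture.congr_ae {P' : X → PMF α} (h : ξ.IsMixture μ P) (hP : P =ᵐ[μ] P') :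
    ξ.IsMixture μ P' :=
  fun a => (h a).trans (lintegral_congr_ae (hP.mono fun _ hx => DFunLike.congr_fun hx a))

lemma IsMixture.comp_measurePreserving {T : Y → X} (h : ξ.IsMixture μ P)
    (hT : MeasurePreserving T ν μ) (hP : ∀ a, Measurable fun x => P x a) :
    ξ.IsMixture ν (P ∘ T) :=
  fun a => (h a).trans (hT.lintegral_comp (hP a)).symm

lemma IsMixture.bind [Countable α] (h : ξ.IsMixture μ P) (hP : ∀ a, Measurable fun x => P x a)
    (K : α → PMF β) : (ξ.bind K).IsMixture μ fun x => (P x).bind K := by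
  intro b
  simp only [PMF.bind_apply, h _]
  rw [lintegral_tsum fun a => ((hP a).mul_const _).aemeasurable]
  exact tsum_congr fun a => (lintegral_mul_const _ (hP a)).symm

lemma IsMixture.bind₂ {γ : Type*} [Countable α] [Countable β] [SFinite ν]
    (hξ : ξ.IsMixture μ P) (hη : η.IsMixture ν Q) (hP : ∀ a, Measurable fun x => P x a)
    (hQ : ∀ b, Measurable fun y => Q y b) (K : α → β → PMF γ) :
    (ξ.bind fun a => η.bind (K a)).IsMixture (μ.prod ν)
      fun q => (P q.1).bind fun a => (Q q.2).bind (K a) := by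
  intro c
  have hmeas : ∀ a b, Measurable fun q : X × Y => P q.1 a * (Q q.2 b * K a b c) := fun a b =>
    ((hP a).comp measurable_fst).mul (((hQ b).comp measurable_snd).mul_const _)
  have hterm : ∀ a b, ξ a * (η b * K a b c)
      = ∫⁻ q, P q.1 a * (Q q.2 b * K a b c) ∂(μ.prod ν) := fun a b => by
    simp only [← mul_assoc]
    rw [lintegral_mul_const (f := fun q : X × Y => P q.1 a * Q q.2 b) _
        (((hP a).comp measurable_fst).mul ((hQ b).comp measurable_snd)),
      lintegral_prod_mul (hP a).aemeasurable (hQ b).aemeasurable, hξ, hη]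
  simp only [PMF.bind_apply, ← ENNReal.tsum_mul_left, hterm]
  rw [lintegral_tsum fun a => (Measurable.tsum fun b => hmeas a b).aemeasurable]
  exact tsum_congr fun a => (lintegral_tsum fun b => (hmeas a b).aemeasurable).symm

lemma IsMixture.pmfThinVec {d : ℕ} {ξ : PMF (Fin d → ℕ)} {P : X → PMF (Fin d → ℕ)}
    (h : ξ.IsMixture μ P) (hP : ∀ a, Measurable fun x => P x a) (t : ℝ) :
    (pmfThinVec t ξ).IsMixture μ fun x => pmfThinVec t (P x) :=
  h.bind hP _

lemma IsMixture.pmfConvVec {d : ℕ} [SFinite ν] {ξ η : PMF (Fin d → ℕ)}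
    {P : X → PMF (Fin d → ℕ)} {Q : Y → PMF (Fin d → ℕ)} (hξ : ξ.IsMixture μ P)
    (hη : η.IsMixture ν Q) (hP : ∀ a, Measurable fun x => P x a)
    (hQ : ∀ b, Measurable fun y => Q y b) :
    (pmfConvVec ξ η).IsMixture (μ.prod ν) fun q => pmfConvVec (P q.1) (Q q.2) :=
  -- `PMF.map f` is definitionally `PMF.bind` with `PMF.pure ∘ f`.
  hξ.bind₂ hη hP hQ fun a b => PMF.pure (a + b)

end PMF

lemma isMixture_poissonVec_of_toReal_eq_integral {d : ℕ} {ν : Measure (Fin d → ℝ)}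
    [IsFiniteMeasure ν] (hν : ∀ᵐ z ∂ν, 0 ≤ z) {ξ : PMF (Fin d → ℕ)}
    (hξ : ∀ f : Fin d → ℕ,
      (ξ f).toReal = ∫ z, ∏ i, (z i ^ f i * Real.exp (-(z i)) / (f i).factorial) ∂ν) :
    ξ.IsMixture ν poissonVec := by
  intro f
  have hfin : ∫⁻ z, poissonVec z f ∂ν ≠ ∞ :=
    ne_top_of_le_ne_top (measure_ne_top ν Set.univ)
      ((lintegral_mono fun z => PMF.coe_le_one _ _).trans_eq lintegral_one)
  rw [← ENNReal.ofReal_toReal (ξ.apply_ne_top f), hξ f,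
    integral_eq_lintegral_of_nonneg_ae (hν.mono fun z hz => prod_nonneg fun i _ =>
      div_nonneg (mul_nonneg (pow_nonneg (hz i) _) (Real.exp_pos _).le) (Nat.cast_nonneg _))
      (by fun_prop),
    lintegral_congr_ae (hν.mono fun z hz => (poissonVec_apply_of_nonneg hz f).symm),
    ENNReal.ofReal_toReal hfin]

theorem mixed_poisson_of_stable_is_discrete_stable_general {d : ℕ} (α : ℝ) (hα0 : 0 < α)
    (ν : Measure (Fin d → ℝ)) [IsProbabilityMeasure ν]
    (hνnn : ν {x | ¬ ∀ i, 0 ≤ x i} = 0)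
    (ξ : PMF (Fin d → ℕ))
    (hmixed : ∀ f : Fin d → ℕ,
      (ξ f).toReal = ∫ x, ∏ i, (x i ^ f i * Real.exp (-(x i)) / ((f i).factorial : ℝ)) ∂ν)
    (hstable : ∀ t : ℝ, 0 ≤ t → t ≤ 1 →
      Measure.map (fun q : (Fin d → ℝ) × (Fin d → ℝ) =>
          t ^ (1/α) • q.1 + (1 - t) ^ (1/α) • q.2) (ν.prod ν) = ν) :
    ∀ t : ℝ, 0 ≤ t → t ≤ 1 →
      pmfConvVec (pmfThinVec (t ^ (1/α)) ξ) (pmfThinVec ((1 - t) ^ (1/α)) ξ) = ξ := by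
  intro t ht0 ht1
  have hν : ∀ᵐ z ∂ν, 0 ≤ z := ae_iff.2 hνnn
  have hξ := isMixture_poissonVec_of_toReal_eq_integral hν hmixed
  have hthin : ∀ u, 0 ≤ u → u ≤ 1 → (pmfThinVec u ξ).IsMixture ν fun z => poissonVec (u • z) :=
    fun u hu0 hu1 => by
      simpa only [pmfThinVec_poissonVec hu0 hu1] using
        hξ.pmfThinVec measurable_poissonVec_apply u
  have hβ : 0 ≤ 1 / α := by positivity
  have hs0 : 0 ≤ t ^ (1/α) := Real.rpow_nonneg ht0 _
  have hs'0 : 0 ≤ (1 - t) ^ (1/α) := Real.rpow_nonneg (by linarith) _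
  have hconv := (hthin _ hs0 (Real.rpow_le_one ht0 ht1 hβ)).pmfConvVec
    (hthin _ hs'0 (Real.rpow_le_one (by linarith) (by linarith) hβ))
    (fun f => (measurable_poissonVec_apply f).comp (measurable_const_smul _))
    (fun f => (measurable_poissonVec_apply f).comp (measurable_const_smul _))
  refine (hconv.congr_ae ?_).eq
    (hξ.comp_measurePreserving ⟨by fun_prop, hstable t ht0 ht1⟩ measurable_poissonVec_apply)
  filter_upwards [Measure.quasiMeasurePreserving_fst.ae hν,
    Measure.quasiMeasurePreserving_snd.ae hν] with q hq₁ hq₂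
  exact pmfConvVec_poissonVec (smul_nonneg hs0 hq₁) (smul_nonneg hs'0 hq₂)

/-- If `ξ` is, conditionally on a nonnegative random vector `ζ` with law `ν`, a vector of
independent Poisson(ζ_i) coordinates, and `ζ` is strictly `α`-stable, then `ξ` is discrete
`α`-stable: `t^{1/α} ∘ ξ' + (1-t)^{1/α} ∘ ξ'' =_d ξ` for all `t ∈ [0,1]`, where `∘` is
coordinatewise independent binomial thinning. -/
theorem mixed_poisson_of_stable_is_discrete_stable {d : ℕ} (α : ℝ) (hα0 : 0 < α) (hα1 : α ≤ 1)
    (ν : Measure (Fin d → ℝ)) [IsProbabilityMeasure ν]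
    (hνnn : ν {x | ¬ ∀ i, 0 ≤ x i} = 0)
    (ξ : PMF (Fin d → ℕ))
    (hmixed : ∀ f : Fin d → ℕ,
      (ξ f).toReal = ∫ x, ∏ i, (x i ^ f i * Real.exp (-(x i)) / ((f i).factorial : ℝ)) ∂ν)
    (hstable : ∀ t : ℝ, 0 ≤ t → t ≤ 1 →
      Measure.map (fun q : (Fin d → ℝ) × (Fin d → ℝ) =>
          t ^ (1/α) • q.1 + (1 - t) ^ (1/α) • q.2) (ν.prod ν) = ν) :
    ∀ t : ℝ, 0 ≤ t → t ≤ 1 →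
      pmfConvVec (pmfThinVec (t ^ (1/α)) ξ) (pmfThinVec ((1 - t) ^ (1/α)) ξ) = ξ :=
  mixed_poisson_of_stable_is_discrete_stable_general α hα0 ν hνnn ξ hmixed hstable
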